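/- Let p ≥ 2 be an integer and α ∈ (0, 1/e). For every integer k with k ≥ log(log(1/α))/log(p/(p−1)), one has α_k ≥ 1/e. -/

import Mathlib

/-- `mu p t = ((t - t^p)/((p-1)(1-t)))^(1/p)`, the real positive `p`th root. -/
noncomputable def mu (p : ℕ) (t : ℝ) : ℝ :=
  ((t - t ^ p) / (((p : ℝ) - 1) * (1 - t))) ^ ((1 : ℝ) / p)

/-- The sequence `α_0 = α`, `α_{k+1} = p α_k / ((p-1) μ(α_k) + μ(α_k)^(1-p) α_k^p)`. -/
noncomputable def alphaSeq (p : ℕ) (α : ℝ) : ℕ → ℝ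
  | 0 => α
  | k + 1 =>
      (p : ℝ) * alphaSeq p α k /
        (((p : ℝ) - 1) * mu p (alphaSeq p α k) +
          alphaSeq p α k ^ p / mu p (alphaSeq p α k) ^ (p - 1))

lemma step_key (q : ℕ) (t : ℝ) (ht0 : 0 < t) (ht1 : t < 1) :
    0 < ((q:ℝ)+2) * t / (((q:ℝ)+1) * mu (q+2) t + t ^ (q+2) / mu (q+2) t ^ (q+1)) ∧
    ((q:ℝ)+2) * t / (((q:ℝ)+1) * mu (q+2) t + t ^ (q+2) / mu (q+2) t ^ (q+1)) < 1 ∧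
    t ^ (((q:ℝ)+1)/((q:ℝ)+2)) ≤
      ((q:ℝ)+2) * t / (((q:ℝ)+1) * mu (q+2) t + t ^ (q+2) / mu (q+2) t ^ (q+1)) := by
  have hq1 : (0:ℝ) < (q:ℝ) + 1 := by positivity
  have hq2 : (0:ℝ) < (q:ℝ) + 2 := by positivity
  have ht1' : (0:ℝ) < 1 - t := by linarith
  set S : ℝ := ∑ i ∈ Finset.range (q+1), t ^ i with hSdef
  have hS_le : S ≤ (q:ℝ) + 1 := by
    rw [hSdef]
    calc (∑ i ∈ Finset.range (q+1), t ^ i) ≤ ∑ _i ∈ Finset.range (q+1), (1:ℝ) :=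
          Finset.sum_le_sum fun i _ => pow_le_one₀ ht0.le ht1.le
      _ = (q:ℝ) + 1 := by simp
  have hS_ge : ((q:ℝ)+1) * t^(q+1) < S := by
    have h1 : ((q:ℝ)+1) * t^q ≤ S := by
      rw [hSdef]
      calc ((q:ℝ)+1) * t^q = ∑ _i ∈ Finset.range (q+1), t^q := by simp [mul_comm]
        _ ≤ _ := Finset.sum_le_sum fun i hi =>
            pow_le_pow_of_le_one ht0.le ht1.le (by have := Finset.mem_range.mp hi; omega)
    have h2 : t^(q+1) < t^q := by
      have : t^(q+1) = t^q * t := pow_succ t q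
      nlinarith [pow_pos ht0 q]
    nlinarith
  have hSpos : 0 < S := lt_trans (by positivity) hS_ge
  have hgeom : (1 - t) * S = 1 - t ^ (q+1) := by
    rw [hSdef]; linear_combination -(geom_sum_mul t (q+1))
  set X : ℝ := t * S / ((q:ℝ)+1) with hXdef
  have hXpos : 0 < X := by positivity
  have hbase : (t - t ^ (q+2)) / ((((q:ℝ)+2) - 1) * (1 - t)) = X := by
    have h1 : t - t^(q+2) = t * ((1-t) * S) := by rw [hgeom]; ring
    have hden : (((q:ℝ)+2) - 1) * (1 - t) ≠ 0 := by
      have h2 : (((q:ℝ)+2) - 1) * (1-t) = ((q:ℝ)+1)*(1-t) := by ring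
      rw [h2]; positivity
    rw [h1, hXdef, div_eq_div_iff hden hq1.ne']
    ring
  set m : ℝ := mu (q+2) t with hmdef
  have hm : m = X ^ ((1:ℝ)/((q:ℝ)+2)) := by
    rw [hmdef, mu]
    push_cast
    rw [hbase]
  have hmpos : 0 < m := by rw [hm]; exact Real.rpow_pos_of_pos hXpos _
  have hmp : m ^ (q+2) = X := by
    rw [hm, ← Real.rpow_natCast (X ^ ((1:ℝ)/((q:ℝ)+2))) (q+2), ← Real.rpow_mul hXpos.le]
    push_cast
    rw [one_div_mul_cancel hq2.ne', Real.rpow_one]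
  have hm_le : m ≤ t ^ ((1:ℝ)/((q:ℝ)+2)) := by
    rw [hm]
    apply Real.rpow_le_rpow hXpos.le ?_ (by positivity)
    rw [hXdef, div_le_iff₀ hq1]
    nlinarith
  have hm_gt : t < m := by
    have h1 : t ^ (q+2) < X := by
      rw [hXdef, lt_div_iff₀ hq1]
      have : t^(q+2) = t * t^(q+1) := by ring
      nlinarith
    calc t = (t ^ (q+2)) ^ ((1:ℝ)/((q:ℝ)+2)) := by
          rw [← Real.rpow_natCast t (q+2), ← Real.rpow_mul ht0.le]
          push_cast
          rw [mul_one_div_cancel hq2.ne', Real.rpow_one]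
      _ < X ^ ((1:ℝ)/((q:ℝ)+2)) := Real.rpow_lt_rpow (by positivity) h1 (by positivity)
      _ = m := hm.symm
  clear_value S X m
  set D : ℝ := ((q:ℝ)+1) * m + t ^ (q+2) / m ^ (q+1) with hDdef
  have hmq1pos : 0 < m ^ (q+1) := pow_pos hmpos _
  -- strict lower bound on denominator
  set G : ℝ := ∑ i ∈ Finset.range (q+1), m ^ i * t ^ (q - i) with hGdef
  have hGid : G * (m - t) = m ^ (q+1) - t ^ (q+1) := by
    rw [hGdef]
    have := geom_sum₂_mul m t (q+1)
    simpa using this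
  have hG_le : G ≤ ((q:ℝ)+1) * m^q := by
    rw [hGdef]
    calc (∑ i ∈ Finset.range (q+1), m ^ i * t ^ (q - i))
        ≤ ∑ _i ∈ Finset.range (q+1), m ^ q := by
          apply Finset.sum_le_sum
          intro i hi
          have hi' : i ≤ q := by have := Finset.mem_range.mp hi; omega
          calc m ^ i * t ^ (q-i) ≤ m ^ i * m ^ (q-i) := by
                apply mul_le_mul_of_nonneg_left (pow_le_pow_left₀ ht0.le hm_gt.le _)
                  (pow_nonneg hmpos.le _)
            _ = m ^ q := by rw [← pow_add]; congr 1; omega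
      _ = ((q:ℝ)+1) * m^q := by simp [mul_comm]
  have hGpos : 0 ≤ G := by
    rw [hGdef]
    apply Finset.sum_nonneg
    intro i _
    positivity
  clear_value G
  have hmt : 0 < m - t := sub_pos.mpr hm_gt
  have h6 : 0 < (m - t) * (((q:ℝ)+1) * m^q * m - t * G) := by
    apply mul_pos hmt
    nlinarith [mul_lt_mul_of_pos_right hm_gt (mul_pos hq1 (pow_pos hmpos q)),
      mul_le_mul_of_nonneg_left hG_le ht0.le]
  have hid : (m - t) * (((q:ℝ)+1) * m^q * m - t * G)
      = ((q:ℝ)+1) * m^(q+2) + t^(q+2) - ((q:ℝ)+2) * t * m^(q+1) := by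
    linear_combination (-t) * hGid
  have hpoly : ((q:ℝ)+2) * t * m^(q+1) < ((q:ℝ)+1) * m^(q+2) + t^(q+2) := by
    nlinarith [h6, hid]
  have hD : D = (((q:ℝ)+1) * m^(q+2) + t^(q+2)) / m^(q+1) := by
    rw [hDdef]
    field_simp
    ring
  have hDgt : ((q:ℝ)+2) * t < D := by
    rw [hD, lt_div_iff₀ hmq1pos]
    linarith
  have hDpos : 0 < D := lt_trans (by positivity) hDgt
  clear_value D
  refine ⟨div_pos (by positivity) hDpos, ?_, ?_⟩
  · rw [div_lt_one hDpos]; exact hDgt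
  · -- lower bound
    have hm1 : m ^ (q+1) = t * S / (((q:ℝ)+1) * m) := by
      rw [eq_div_iff (mul_pos hq1 hmpos).ne']
      calc m^(q+1) * (((q:ℝ)+1)*m) = (m^(q+1)*m) * ((q:ℝ)+1) := by ring
        _ = (t*S/((q:ℝ)+1)) * ((q:ℝ)+1) := by rw [← pow_succ, hmp, hXdef]
        _ = t*S := by field_simp
    have hq3 : t ^ (q+2) / m ^ (q+1) = ((q:ℝ)+1) * m * t^(q+1) / S := by
      rw [hm1, div_div_eq_mul_div, div_eq_div_iff (by positivity) hSpos.ne']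
      ring
    have hDalt : D = ((q:ℝ)+1) * m * (S + t^(q+1)) / S := by
      rw [hDdef, hq3, eq_div_iff hSpos.ne', add_mul, div_mul_cancel₀ _ hSpos.ne']
      ring
    have hT : ((q:ℝ)+1) * (S + t^(q+1)) ≤ ((q:ℝ)+2) * S := by linarith [hS_ge]
    have hc : (0:ℝ) ≤ t ^ ((1:ℝ)/((q:ℝ)+2)) := (Real.rpow_pos_of_pos ht0 _).le
    have hD_le : D ≤ ((q:ℝ)+2) * t ^ ((1:ℝ)/((q:ℝ)+2)) := by
      rw [hDalt, div_le_iff₀ hSpos]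
      have hb : (0:ℝ) ≤ S + t^(q+1) := by positivity
      calc ((q:ℝ)+1) * m * (S + t^(q+1))
          ≤ ((q:ℝ)+1) * t ^ ((1:ℝ)/((q:ℝ)+2)) * (S + t^(q+1)) := by
            apply mul_le_mul_of_nonneg_right (mul_le_mul_of_nonneg_left hm_le hq1.le) hb
        _ ≤ ((q:ℝ)+2) * t ^ ((1:ℝ)/((q:ℝ)+2)) * S := by
            linarith [mul_le_mul_of_nonneg_left hT hc]
    rw [le_div_iff₀ hDpos]
    have hrp : (0:ℝ) ≤ t ^ (((q:ℝ)+1)/((q:ℝ)+2)) := (Real.rpow_pos_of_pos ht0 _).le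
    calc t ^ (((q:ℝ)+1)/((q:ℝ)+2)) * D
        ≤ t ^ (((q:ℝ)+1)/((q:ℝ)+2)) * (((q:ℝ)+2) * t ^ ((1:ℝ)/((q:ℝ)+2))) :=
          mul_le_mul_of_nonneg_left hD_le hrp
      _ = ((q:ℝ)+2) * (t ^ (((q:ℝ)+1)/((q:ℝ)+2)) * t ^ ((1:ℝ)/((q:ℝ)+2))) := by ring
      _ = ((q:ℝ)+2) * t := by
          rw [← Real.rpow_add ht0, ← add_div]
          have he : ((q:ℝ)+1+1)/((q:ℝ)+2) = 1 := by
            rw [div_eq_one_iff_eq hq2.ne']; ring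
          rw [he, Real.rpow_one]

/-- **Stage 1 bound.** Let `p ≥ 2` and `α ∈ (0, 1/e)`.  For every integer
`k ≥ log(log(1/α))/log(p/(p-1))`, one has `α_k ≥ 1/e`. -/
theorem alphaSeq_stage_one (p : ℕ) (hp : 2 ≤ p)
    (α : ℝ) (hα : α ∈ Set.Ioo (0 : ℝ) (1 / Real.exp 1)) (k : ℕ)
    (hk : (k : ℝ) ≥ Real.log (Real.log (1 / α)) / Real.log ((p : ℝ) / ((p : ℝ) - 1))) :
    alphaSeq p α k ≥ 1 / Real.exp 1 := by
  obtain ⟨q, rfl⟩ : ∃ q, p = q + 2 := ⟨p - 2, by omega⟩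
  obtain ⟨hα0, hα1⟩ := hα
  have hexp1 : (2:ℝ) ≤ Real.exp 1 := by
    have := Real.add_one_le_exp 1; linarith
  have he1 : (1:ℝ)/Real.exp 1 < 1 := by
    rw [div_lt_one (Real.exp_pos 1)]; linarith
  have hα1' : α < 1 := lt_trans hα1 he1
  have hq1 : (0:ℝ) < (q:ℝ) + 1 := by positivity
  have hq2 : (0:ℝ) < (q:ℝ) + 2 := by positivity
  set r : ℝ := ((q:ℝ)+1)/((q:ℝ)+2) with hr
  have hr0 : 0 < r := by positivity
  have main : ∀ n, (0 < alphaSeq (q+2) α n ∧ alphaSeq (q+2) α n < 1) ∧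
      α ^ (r ^ n) ≤ alphaSeq (q+2) α n := by
    intro n
    induction n with
    | zero =>
      refine ⟨⟨hα0, hα1'⟩, ?_⟩
      show α ^ (r ^ 0) ≤ α
      rw [pow_zero, Real.rpow_one]
    | succ n ih =>
      obtain ⟨⟨ht0, ht1⟩, hlow⟩ := ih
      set t := alphaSeq (q+2) α n with htdef
      obtain ⟨hpos, hlt, hge⟩ := step_key q t ht0 ht1
      have hstep : alphaSeq (q+2) α (n+1) =
          ((q:ℝ)+2) * t / (((q:ℝ)+1) * mu (q+2) t + t ^ (q+2) / mu (q+2) t ^ (q+1)) := by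
        show ((q+2:ℕ):ℝ) * t / ((((q+2:ℕ):ℝ) - 1) * mu (q+2) t + t ^ (q+2) / mu (q+2) t ^ (q+2-1)) = _
        norm_num
        ring_nf
      rw [hstep]
      refine ⟨⟨hpos, hlt⟩, ?_⟩
      calc α ^ (r ^ (n+1)) = α ^ (r ^ n * r) := by rw [pow_succ]
        _ = (α ^ (r ^ n)) ^ r := Real.rpow_mul hα0.le _ _
        _ ≤ t ^ r := Real.rpow_le_rpow (Real.rpow_pos_of_pos hα0 _).le hlow hr0.le
        _ ≤ _ := hge
  obtain ⟨_, hlow⟩ := main k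
  refine le_trans ?_ hlow
  -- 1/exp 1 ≤ α ^ (r ^ k)
  have hea : Real.exp 1 < 1/α := by
    rw [lt_div_iff₀ hα0]
    have := (lt_div_iff₀ (Real.exp_pos 1)).mp hα1
    linarith [this]
  set L : ℝ := Real.log (1/α) with hL
  have hL1 : 1 < L := by
    have := Real.log_lt_log (Real.exp_pos 1) hea
    rwa [Real.log_exp] at this
  have hLpos : 0 < L := by linarith
  have hc : 0 < Real.log (((q:ℝ)+2)/((q:ℝ)+1)) :=
    Real.log_pos (by rw [lt_div_iff₀ hq1]; linarith)
  have hkc : Real.log L ≤ (k:ℝ) * Real.log (((q:ℝ)+2)/((q:ℝ)+1)) := by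
    have hk' : Real.log L / Real.log (((q:ℝ)+2)/((q:ℝ)+1)) ≤ (k:ℝ) := by
      have hcast : ((q+2:ℕ):ℝ) / (((q+2:ℕ):ℝ) - 1) = ((q:ℝ)+2)/((q:ℝ)+1) := by
        push_cast; ring_nf
      rw [hL]
      calc Real.log (Real.log (1/α)) / Real.log (((q:ℝ)+2)/((q:ℝ)+1))
          = Real.log (Real.log (1/α)) / Real.log (((q+2:ℕ):ℝ) / (((q+2:ℕ):ℝ) - 1)) := by
            rw [hcast]
        _ ≤ (k:ℝ) := hk
    exact (div_le_iff₀ hc).mp hk'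
  have hrk_log : Real.log (r ^ k) ≤ -Real.log L := by
    rw [Real.log_pow]
    have hlogr : Real.log r = -Real.log (((q:ℝ)+2)/((q:ℝ)+1)) := by
      rw [hr, ← Real.log_inv, inv_div]
    rw [hlogr, mul_neg]
    linarith
  have hrk_le : r ^ k ≤ 1/L := by
    have h1 := Real.exp_le_exp.mpr hrk_log
    rwa [Real.exp_log (pow_pos hr0 k), Real.exp_neg, Real.exp_log hLpos, ← one_div] at h1
  have hLrk : L * r ^ k ≤ 1 := by
    calc L * r ^ k ≤ L * (1/L) := mul_le_mul_of_nonneg_left hrk_le hLpos.le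
      _ = 1 := mul_one_div_cancel hLpos.ne'
  have hlogα : Real.log α = -L := by
    rw [hL, one_div, Real.log_inv, neg_neg]
  calc 1/Real.exp 1 = Real.exp (-1) := by rw [Real.exp_neg, one_div]
    _ ≤ Real.exp (Real.log α * r ^ k) := by
      apply Real.exp_le_exp.mpr
      rw [hlogα, neg_mul]
      linarith
    _ = α ^ (r ^ k) := (Real.rpow_def_of_pos hα0 _).symm
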